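/- arXiv:2403.15552 — 12 statements merged into one kernel-verified Lean document; each statement's English description precedes it below -/
import Mathlib

section
/- Let λ be an ordinal and X ⊆ λ + 1. If there exists ξ ≤ λ with cofinality ω₁ such that X ∩ ξ is unbounded in ξ, X ∩ ξ is not stationary in ξ, and ξ ∉ X, then X (with the subspace topology of the order topology) contains an uncountable closed discrete subset. -/
/-!
Take a club `C` in `ξ` missing `X`. In every gap of `C` that meets `X` keep the least point of `X`;
since `X` is unbounded in `ξ` these points are unbounded in `ξ`, hence uncountable as `cf ξ = ω₁`.
Between any two of them lies a point of `C`, so every accumulation point of them below `ξ` is an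
accumulation point of `C`, hence lies in `C` and not in `X`. Their only other accumulation point
is `ξ ∉ X`, so they form a closed discrete subset of `X`.
-/

/-- `C` is a club (closed unbounded) subset of the ordinal `ξ`. -/
def IsClubIn (C : Set Ordinal) (ξ : Ordinal) : Prop :=
  C ⊆ Set.Iio ξ ∧ (∀ a < ξ, ∃ c ∈ C, a ≤ c) ∧
    (∀ a < ξ, (C ∩ Set.Iio a).Nonempty → sSup (C ∩ Set.Iio a) = a → a ∈ C)

/-- `S` is stationary in the ordinal `ξ`. -/
def IsStationaryIn (S : Set Ordinal) (ξ : Ordinal) : Prop :=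
  ∀ C : Set Ordinal, IsClubIn C ξ → (S ∩ C).Nonempty

open Set Filter Topology

universe u

theorem isClosed_and_discreteTopology_preimage_val {α : Type*} [TopologicalSpace α]
    {Y E : Set α} (h : ∀ x ∈ Y, ¬ AccPt x (𝓟 E)) :
    IsClosed (Subtype.val ⁻¹' E : Set Y) ∧ DiscreteTopology (Subtype.val ⁻¹' E : Set Y) := by
  rw [← isDiscrete_iff_discreteTopology, isClosed_and_discrete_iff]
  intro x
  rw [disjoint_iff, ← not_neBot]
  intro hacc
  have hmap := AccPt.map hacc continuous_subtype_val.continuousAt Subtype.val_injective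
  rw [map_principal] at hmap
  exact h x x.2 (hmap.mono (principal_mono.mpr (image_preimage_subset _ _)))

section LinearOrder

variable {α : Type*} [LinearOrder α]

/-- The least point of `X` in each gap of `C`. -/
def leastInGaps (C X : Set α) : Set α :=
  {x ∈ X | ∀ y ∈ X, y < x → ∃ c ∈ C, y ≤ c ∧ c < x}

theorem exists_mem_leastInGaps [WellFoundedLT α] {C X : Set α} {c x : α} (hc : c ∈ C)
    (hx : x ∈ X) (hcx : c < x) : ∃ d ∈ leastInGaps C X, c < d ∧ d ≤ x := by
  obtain ⟨d, ⟨hdX, hcd⟩, hd_min⟩ := wellFounded_lt.has_min {y | y ∈ X ∧ c < y} ⟨x, hx, hcx⟩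
  refine ⟨d, ⟨hdX, fun y hyX hyd => ⟨c, hc, ?_, hcd⟩⟩, hcd, not_lt.mp (hd_min x ⟨hx, hcx⟩)⟩
  exact not_lt.mp fun hcy => hd_min y ⟨hyX, hcy⟩ hyd

variable [TopologicalSpace α] [OrderTopology α] [SuccOrder α] [NoMaxOrder α]

theorem not_accPt_of_subset_Iio {D : Set α} {ξ x : α} (hD : D ⊆ Iio ξ) (hξx : ξ < x) :
    ¬ AccPt x (𝓟 D) := by
  rw [SuccOrder.accPt_principal]
  rintro ⟨-, hD_near⟩
  obtain ⟨d, hdD, hξd, -⟩ := hD_near ξ hξx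
  exact (hD hdD).not_gt hξd

theorem accPt_of_accPt_leastInGaps {C X : Set α} {x : α}
    (h : AccPt x (𝓟 (leastInGaps C X))) : AccPt x (𝓟 C) := by
  rw [SuccOrder.accPt_principal] at h ⊢
  obtain ⟨hx_min, hD_near⟩ := h
  refine ⟨hx_min, fun b hb => ?_⟩
  obtain ⟨d, hdD, hbd, hdx⟩ := hD_near b hb
  obtain ⟨d', hd'D, hdd', hd'x⟩ := hD_near d hdx
  obtain ⟨c, hc, hdc, hcd'⟩ := hd'D.2 d hdD.1 hdd'
  exact ⟨c, hc, hbd.trans_le hdc, hcd'.trans hd'x⟩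

end LinearOrder

theorem IsClubIn.mem_of_accPt {C : Set Ordinal} {ξ x : Ordinal} (hC : IsClubIn C ξ) (hxξ : x < ξ)
    (hacc : AccPt x (𝓟 C)) : x ∈ C := by
  rw [SuccOrder.accPt_principal] at hacc
  obtain ⟨hx_min, hC_near⟩ := hacc
  have hx_pos : 0 < x := pos_iff_ne_zero.mpr fun hx => hx_min (hx ▸ isMin_bot)
  have hbdd : BddAbove (C ∩ Iio x) := ⟨x, fun _ hc => hc.2.le⟩
  obtain ⟨c₀, hc₀, -, hc₀x⟩ := hC_near 0 hx_pos
  refine hC.2.2 x hxξ ⟨c₀, hc₀, hc₀x⟩ (le_antisymm (csSup_le' fun _ hc => hc.2.le) ?_)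
  refine not_lt.mp fun hsup => ?_
  obtain ⟨c, hc, hsupc, hcx⟩ := hC_near _ hsup
  exact (le_csSup hbdd ⟨hc, hcx⟩).not_gt hsupc

theorem Ordinal.not_countable_of_forall_exists_gt {S : Set Ordinal.{u}} {ξ : Ordinal.{u}}
    (hξ : Cardinal.aleph0 < ξ.cof) (hS : S ⊆ Iio ξ) (hunb : ∀ a < ξ, ∃ s ∈ S, a < s) :
    ¬ S.Countable := by
  intro hcount
  have hcard : Cardinal.mk S < (Ordinal.lift.{u + 1} ξ).cof := by
    rw [← Ordinal.lift_cof]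
    have hξ' : Cardinal.aleph0 < Cardinal.lift.{u + 1} ξ.cof := by
      rwa [← Cardinal.lift_aleph0.{u + 1, u}, Cardinal.lift_lt]
    exact hcount.le_aleph0.trans_lt hξ'
  obtain ⟨s, hsS, hs⟩ := hunb _ (Ordinal.sSup_lt_of_lt_cof hcard hS)
  exact (le_csSup ⟨ξ, fun _ h => (hS h).le⟩ hsS).not_gt hs

theorem stmt0_general (X : Set Ordinal) (ξ : Ordinal)
    (hcof : ξ.cof = Cardinal.aleph 1)
    (hunb : ∀ a < ξ, ∃ b ∈ X, b < ξ ∧ a < b)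
    (hnstat : ¬ IsStationaryIn (X ∩ Set.Iio ξ) ξ)
    (hnot : ξ ∉ X) :
    ∃ D : Set X, ¬ D.Countable ∧ IsClosed D ∧ DiscreteTopology D := by
  obtain ⟨C, hC, hCX⟩ : ∃ C, IsClubIn C ξ ∧ X ∩ Iio ξ ∩ C = ∅ := by
    simpa [IsStationaryIn, not_nonempty_iff_eq_empty] using hnstat
  set D := leastInGaps C X ∩ Iio ξ
  have hD_unbounded : ∀ a < ξ, ∃ d ∈ D, a < d := by
    intro a ha
    obtain ⟨c, hcC, hac⟩ := hC.2.1 a ha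
    obtain ⟨x, hxX, hxξ, hcx⟩ := hunb c (hC.1 hcC)
    obtain ⟨d, hd, hcd, hdx⟩ := exists_mem_leastInGaps hcC hxX hcx
    exact ⟨d, ⟨hd, hdx.trans_lt hxξ⟩, hac.trans_lt hcd⟩
  have hD_no_accPt : ∀ x ∈ X, ¬ AccPt x (𝓟 D) := by
    intro x hxX hacc
    rcases lt_trichotomy x ξ with hxξ | rfl | hξx
    · have hxC := hC.mem_of_accPt hxξ <| accPt_of_accPt_leastInGaps <|
        hacc.mono (principal_mono.mpr inter_subset_left)
      exact (hCX ▸ ⟨⟨hxX, hxξ⟩, hxC⟩ : x ∈ (∅ : Set Ordinal))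
    · exact hnot hxX
    · exact not_accPt_of_subset_Iio inter_subset_right hξx hacc
  have hD_uncountable : ¬ D.Countable :=
    Ordinal.not_countable_of_forall_exists_gt (hcof ▸ Cardinal.aleph0_lt_aleph_one)
      inter_subset_right hD_unbounded
  refine ⟨Subtype.val ⁻¹' D, fun hcount => hD_uncountable ?_,
    isClosed_and_discreteTopology_preimage_val hD_no_accPt⟩
  have himage := hcount.image Subtype.val
  rwa [Subtype.image_preimage_coe, inter_eq_right.mpr fun _ hd => hd.1.1] at himage

theorem stmt0 (l : Ordinal) (X : Set Ordinal) (hX : X ⊆ Set.Iic l)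
    (ξ : Ordinal) (hξl : ξ ≤ l)
    (hcof : ξ.cof = Cardinal.aleph 1)
    (hunb : ∀ a < ξ, ∃ b ∈ X, b < ξ ∧ a < b)
    (hnstat : ¬ IsStationaryIn (X ∩ Set.Iio ξ) ξ)
    (hnot : ξ ∉ X) :
    ∃ D : Set X, ¬ D.Countable ∧ IsClosed D ∧ DiscreteTopology D :=
  stmt0_general X ξ hcof hunb hnstat hnot
end

section
/- Let λ be an ordinal and X ⊆ λ + 1 a subspace (of the order topology on λ+1) with countable extent. If ξ ≤ λ is a limit ordinal with cofinality strictly greater than ω₁ and X ∩ ξ is unbounded in ξ, then X ∩ ξ is stationary in ξ. -/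
theorem stmt1 (l : Ordinal) (X : Set Ordinal) (hX : X ⊆ Set.Iic l)
    (hext : ∀ D : Set X, IsClosed D → DiscreteTopology D → D.Countable)
    (ξ : Ordinal) (hξl : ξ ≤ l) (hlim : Order.IsSuccLimit ξ)
    (hcof : Cardinal.aleph 1 < ξ.cof)
    (hunb : ∀ a < ξ, ∃ b ∈ X, b < ξ ∧ a < b) :
    IsStationaryIn (X ∩ Set.Iio ξ) ξ := by
  intro C hC
  obtain ⟨hCsub, hCunb, hCcl⟩ := hC
  by_contra hemp
  have hdis : ∀ a, a ∈ X → a < ξ → a ∉ C := fun a ha hlt hc =>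
    hemp ⟨a, ⟨ha, hlt⟩, hc⟩
  -- a total step function: given `s < ξ`, produce `c ∈ C`, `x ∈ X` with `s ≤ c < x < ξ`
  have hstep : ∀ s : Ordinal, ∃ p : Ordinal × Ordinal, s < ξ →
      p.1 ∈ C ∧ p.2 ∈ X ∧ p.2 < ξ ∧ s ≤ p.1 ∧ p.1 < p.2 := by
    intro s
    by_cases hs : s < ξ
    · obtain ⟨c, hcC, hsc⟩ := hCunb s hs
      obtain ⟨b, hbX, hbξ, hcb⟩ := hunb c (hCsub hcC)
      exact ⟨(c, b), fun _ => ⟨hcC, hbX, hbξ, hsc, hcb⟩⟩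
    · exact ⟨(0, 0), fun h => absurd h hs⟩
  choose F hF using hstep
  -- the recursive interleaved sequence
  obtain ⟨f, hfeq⟩ : ∃ f : Ordinal → Ordinal × Ordinal,
      ∀ α, f α = F (Ordinal.bsup.{u_1, u_1} α fun β _ => (f β).2) := by
    refine ⟨Ordinal.lt_wf.fix (fun α ih => F (Ordinal.bsup.{u_1, u_1} α fun β hβ => (ih β hβ).2)),
      fun α => ?_⟩
    exact Ordinal.lt_wf.fix_eq _ α
  set o1 : Ordinal := (Cardinal.aleph 1).ord with ho1
  -- partial sups stay below ξ
  have key : ∀ α, α < o1 → (Ordinal.bsup.{u_1, u_1} α fun β _ => (f β).2) < ξ := by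
    intro α
    induction α using Ordinal.induction with
    | h α IH =>
      intro hα
      refine Ordinal.bsup_lt_ord ?_ ?_
      · exact lt_trans (by rw [ho1] at hα; exact Cardinal.lt_ord.1 hα) hcof
      · intro β hβ
        have hsβ := IH β hβ (hβ.trans hα)
        rw [hfeq β]
        exact (hF _ hsβ).2.2.1
  have hprop : ∀ α, α < o1 → (f α).1 ∈ C ∧ (f α).2 ∈ X ∧ (f α).2 < ξ ∧
      (Ordinal.bsup.{u_1, u_1} α fun β _ => (f β).2) ≤ (f α).1 ∧ (f α).1 < (f α).2 := by
    intro α hα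
    have h := hF _ (key α hα)
    rw [hfeq α]
    exact h
  have hmono : ∀ β α, β < α → α < o1 → (f β).2 < (f α).2 := by
    intro β α hβα hα
    have h1 : (f β).2 ≤ Ordinal.bsup.{u_1, u_1} α (fun γ _ => (f γ).2) := Ordinal.le_bsup _ β hβα
    exact lt_of_le_of_lt (h1.trans (hprop α hα).2.2.2.1) (hprop α hα).2.2.2.2
  set E : Set Ordinal := (fun α => (f α).2) '' Set.Iio o1 with hE
  have hsupE : Ordinal.bsup.{u_1, u_1} o1 (fun β _ => (f β).2) < ξ := by
    refine Ordinal.bsup_lt_ord ?_ fun β hβ => (hprop β hβ).2.2.1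
    rw [ho1, Cardinal.card_ord]
    exact hcof
  -- every point of `X` in the closure of `E` is in `E`
  have hclos : ∀ p ∈ X, p ∈ closure E → p ∈ E := by
    intro p hpX hp
    by_contra hpE
    rw [Ordinal.mem_closure_iff_iSup] at hp
    obtain ⟨ι, hι, g, hg, hsup⟩ := hp
    have hlt : ∀ i, g i < p := by
      intro i
      rcases lt_or_eq_of_le (hsup ▸ le_ciSup (Ordinal.bddAbove_range g) i) with h | h
      · exact h
      · exact absurd (h ▸ hg i) hpE
    have hpξ : p < ξ := by
      rw [← hsup]
      refine lt_of_le_of_lt (Ordinal.iSup_le_iff.2 fun i => ?_) hsupE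
      obtain ⟨β, hβ, hgi⟩ := hg i
      rw [← hgi]
      exact Ordinal.le_bsup _ β hβ
    have hdense : ∀ b < p, ∃ c' ∈ C ∩ Set.Iio p, b < c' := by
      intro b hb
      rw [← hsup] at hb
      obtain ⟨i, hi⟩ := Ordinal.lt_iSup_iff.1 hb
      obtain ⟨j, hj⟩ := Ordinal.lt_iSup_iff.1 (hsup ▸ hlt i : g i < ⨆ k, g k)
      obtain ⟨β, hβ, hgi⟩ := hg i
      obtain ⟨γ, hγ, hgj⟩ := hg j
      have hβγ : β < γ := by
        by_contra h
        push_neg at h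
        rcases lt_or_eq_of_le h with h' | h'
        · exact absurd (hj.trans (hgj ▸ hgi ▸ hmono γ β h' hβ : g j < g i)) (lt_irrefl _)
        · rw [h'] at hgj
          rw [← hgi, ← hgj] at hj
          exact absurd hj (lt_irrefl _)
      refine ⟨(f γ).1, ⟨(hprop γ hγ).1, ?_⟩, ?_⟩
      · exact lt_trans ((hprop γ hγ).2.2.2.2.trans_le (le_of_eq hgj)) (hlt j)
      · exact lt_of_lt_of_le (hi.trans_eq hgi.symm)
          ((Ordinal.le_bsup _ β hβγ).trans (hprop γ hγ).2.2.2.1)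
    have hne : (C ∩ Set.Iio p).Nonempty := by
      obtain ⟨i⟩ := hι
      obtain ⟨c', hc', _⟩ := hdense (g i) (hlt i)
      exact ⟨c', hc'⟩
    have hsSup : sSup (C ∩ Set.Iio p) = p := by
      refine le_antisymm (csSup_le hne fun c' hc' => hc'.2.le) ?_
      by_contra h
      push_neg at h
      obtain ⟨c', hc', hbc⟩ := hdense _ h
      exact absurd (le_csSup ⟨p, fun y hy => hy.2.le⟩ hc') (not_le.2 hbc)
    exact hdis p hpX hpξ (hCcl p hpξ hne hsSup)
  -- the closed discrete subspace
  set D : Set X := Subtype.val ⁻¹' (closure E) with hD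
  have hDclosed : IsClosed D := isClosed_closure.preimage continuous_subtype_val
  have hmemD : ∀ e : D, ∃ β, β < o1 ∧ (f β).2 = ((e : X) : Ordinal) := by
    intro e
    have h1 : ((e : X) : Ordinal) ∈ X := (e : X).2
    have h2 : ((e : X) : Ordinal) ∈ closure E := e.2
    obtain ⟨β, hβ, hfe⟩ := hclos _ h1 h2
    exact ⟨β, hβ, hfe⟩
  have hcont : Continuous fun e : D => ((e : X) : Ordinal) :=
    continuous_subtype_val.comp continuous_subtype_val
  have hDdisc : DiscreteTopology D := by
    rw [discreteTopology_iff_isOpen_singleton]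
    intro d
    obtain ⟨α, hα, heq⟩ := hmemD d
    have hUopen : IsOpen (Set.Ioo (f α).1 ((f α).2 + 1)) := isOpen_Ioo
    have hset : {d} = (fun e : D => ((e : X) : Ordinal)) ⁻¹' Set.Ioo (f α).1 ((f α).2 + 1) := by
      ext e
      simp only [Set.mem_singleton_iff, Set.mem_preimage, Set.mem_Ioo]
      constructor
      · rintro rfl
        refine ⟨heq ▸ (hprop α hα).2.2.2.2, heq ▸ ?_⟩
        rw [Ordinal.add_one_eq_succ]
        exact Order.lt_succ _
      · rintro ⟨h1, h2⟩
        rw [Ordinal.add_one_eq_succ, Order.lt_succ_iff] at h2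
        obtain ⟨β, hβ, heqe⟩ := hmemD e
        have hβα : β = α := by
          rcases lt_trichotomy β α with h | h | h
          · have : (f β).2 ≤ (f α).1 :=
              (Ordinal.le_bsup _ β h).trans (hprop α hα).2.2.2.1
            rw [heqe] at this
            exact absurd h1 (not_lt.2 this)
          · exact h
          · have := hmono α β h hβ
            rw [heqe] at this
            exact absurd (lt_of_le_of_lt h2 this) (lt_irrefl _)
        apply Subtype.ext
        apply Subtype.ext
        rw [← heqe, hβα, heq]
    rw [hset]
    exact hUopen.preimage hcont
  -- D is uncountable : contradiction
  have hcnt := hext D hDclosed hDdisc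
  have hg : ∀ β : Set.Iio o1, (f (β : Ordinal)).2 ∈ X := fun β => (hprop β.1 β.2).2.1
  have hg2 : ∀ β : Set.Iio o1, (⟨(f (β : Ordinal)).2, hg β⟩ : X) ∈ D := by
    intro β
    exact subset_closure ⟨β.1, β.2, rfl⟩
  have hinj : Function.Injective (fun β : Set.Iio o1 =>
      (⟨⟨(f (β : Ordinal)).2, hg β⟩, hg2 β⟩ : D)) := by
    intro β γ h
    have h' : (f (β : Ordinal)).2 = (f (γ : Ordinal)).2 := by
      have := congrArg (fun e : D => ((e : X) : Ordinal)) h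
      exact this
    rcases lt_trichotomy (β : Ordinal) (γ : Ordinal) with hlt' | heq' | hgt'
    · exact absurd (h' ▸ hmono _ _ hlt' γ.2) (lt_irrefl _)
    · exact Subtype.ext heq'
    · exact absurd (h' ▸ hmono _ _ hgt' β.2) (lt_irrefl _)
  have : Countable D := hcnt.to_subtype
  have hc1 : Countable (Set.Iio o1) := Function.Injective.countable hinj
  have hc2 : (Set.Iio o1).Countable := Set.countable_coe_iff.1 hc1
  have hc3 := hc2.le_aleph0
  rw [Ordinal.mk_Iio_ordinal, ho1, Cardinal.card_ord] at hc3
  have hc4 : Cardinal.aleph 1 ≤ Cardinal.aleph0 := by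
    have := hc3.trans_eq Cardinal.lift_aleph0.{u_1+1, u_1}.symm
    exact Cardinal.lift_le.1 this
  exact absurd hc4 (not_le.2 Cardinal.aleph0_lt_aleph_one)
end

section
/- Let λ be an ordinal and X ⊆ λ + 1. If X contains an uncountable closed discrete subset (in the subspace topology of the order topology on λ+1), then there exists ξ ≤ λ with cofinality ω₁ such that X ∩ ξ is unbounded in ξ, X ∩ ξ is not stationary in ξ, and ξ ∉ X. -/
open Set Filter Topology Cardinal Order

theorem not_accPt_image_val_of_isClosed_of_discreteTopology {Y : Type*} [TopologicalSpace Y]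
    {X : Set Y} {D : Set X} (hDcl : IsClosed D) (hDdisc : DiscreteTopology D) (x : X) :
    ¬ AccPt (x : Y) (𝓟 (Subtype.val '' D)) := by
  have hdisj : Disjoint (𝓝[≠] x) (𝓟 D) :=
    isClosed_and_discrete_iff.1 ⟨hDcl, isDiscrete_iff_discreteTopology.2 hDdisc⟩ x
  rw [accPt_principal_iff_nhdsWithin, ← image_singleton, ← image_sdiff Subtype.val_injective,
    ← IsInducing.subtypeVal.map_nhdsWithin_eq, map_neBot_iff, ← accPt_principal_iff_nhdsWithin]
  exact fun h => h.ne (disjoint_iff.1 hdisj)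

theorem isClubIn_inter_Iio_of_isClosed {C : Set Ordinal} {ξ : Ordinal} (hC : IsClosed C)
    (hcof : ∀ a < ξ, ∃ c ∈ C, a ≤ c ∧ c < ξ) : IsClubIn (C ∩ Iio ξ) ξ := by
  refine ⟨inter_subset_right, fun a ha => ?_, fun a ha hne hsup => ⟨?_, ha⟩⟩
  · obtain ⟨c, hcC, hac, hcξ⟩ := hcof a ha
    exact ⟨c, ⟨hcC, hcξ⟩, hac⟩
  · have hlub := isLUB_csSup hne ⟨a, fun _ hb => le_of_lt hb.2⟩
    rw [hsup] at hlub
    exact hC.closure_subset (closure_mono (fun _ hb => hb.1.1) (hlub.mem_closure hne))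

noncomputable def uncountableCut (S : Set Ordinal) : Ordinal :=
  sInf {β | ¬ (S ∩ Iio β).Countable}

section UncountableCut

variable {S : Set Ordinal} {a : Ordinal}

theorem countable_inter_Iio_of_lt_uncountableCut (ha : a < uncountableCut S) :
    (S ∩ Iio a).Countable := by
  by_contra h
  exact (csInf_le' h).not_gt ha

theorem countable_inter_Iic_of_lt_uncountableCut (ha : a < uncountableCut S) :
    (S ∩ Iic a).Countable :=
  ((countable_inter_Iio_of_lt_uncountableCut ha).insert a).mono fun _ ⟨hbS, hba⟩ =>
    hba.eq_or_lt.imp id fun h => ⟨hbS, h⟩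

variable (hS : ¬ S.Countable) (hSb : BddAbove S)
include hS hSb

theorem not_countable_inter_Iio_uncountableCut : ¬ (S ∩ Iio (uncountableCut S)).Countable := by
  obtain ⟨b, hb⟩ := hSb
  refine csInf_mem (s := {β | ¬ (S ∩ Iio β).Countable}) ⟨succ b, ?_⟩
  have hSsub : S ⊆ Iio (succ b) := fun s hs => lt_succ_of_le (hb hs)
  rwa [mem_ofPred_eq, inter_eq_left.2 hSsub]

theorem exists_mem_Ioo_of_lt_uncountableCut (ha : a < uncountableCut S) :
    ∃ b ∈ S, a < b ∧ b < uncountableCut S := by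
  by_contra! h
  refine not_countable_inter_Iio_uncountableCut hS hSb
    ((countable_inter_Iic_of_lt_uncountableCut ha).mono fun b hb => ?_)
  exact ⟨hb.1, not_lt.1 fun hab => (h b hb.1 hab).not_gt hb.2⟩

theorem exists_mem_lt_uncountableCut_forall_lt_of_countable {T : Set Ordinal} (hT : T.Countable)
    (hTξ : T ⊆ Iio (uncountableCut S)) : ∃ b ∈ S, b < uncountableCut S ∧ ∀ t ∈ T, t < b := by
  have hcount : (⋃ t ∈ T, S ∩ Iic t).Countable :=
    hT.biUnion fun t ht => countable_inter_Iic_of_lt_uncountableCut (hTξ ht)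
  obtain ⟨b, ⟨hbS, hbξ⟩, hb⟩ :=
    not_subset.1 fun h => not_countable_inter_Iio_uncountableCut hS hSb (hcount.mono h)
  simp only [mem_iUnion, mem_inter_iff, mem_Iic, not_exists, not_and, not_le] at hb
  exact ⟨b, hbS, hbξ, fun t ht => hb t ht hbS⟩

theorem aleph0_lt_cof_uncountableCut : ℵ₀ < (uncountableCut S).cof := by
  by_contra! h
  obtain ⟨s, hs, hcard⟩ := Order.exists_cof_eq (Iio (uncountableCut S))
  have hsc : s.Countable := by
    rw [← le_aleph0_iff_set_countable, hcard, Ordinal.cof_Iio, ← Ordinal.lift_cof]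
    exact lift_le_aleph0.2 h
  obtain ⟨b, -, hbξ, hb⟩ := exists_mem_lt_uncountableCut_forall_lt_of_countable hS hSb
    (hsc.image Subtype.val) (image_subset_iff.2 fun t _ => t.2)
  obtain ⟨t, hts, hbt⟩ := hs ⟨b, hbξ⟩
  exact (hb t (mem_image_of_mem _ hts)).not_ge hbt

theorem cof_uncountableCut_le_aleph_one : (uncountableCut S).cof ≤ ℵ₁ := by
  by_contra! h
  obtain ⟨T, hTS, hTcard⟩ := le_mk_iff_exists_subset.1 <| succ_aleph0 ▸ succ_le_of_lt <|
    not_le.1 (le_aleph0_iff_set_countable.not.2 (not_countable_inter_Iio_uncountableCut hS hSb))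
  have hsup : sSup T < uncountableCut S := by
    refine Ordinal.sSup_lt_of_lt_cof ?_ fun t ht => (hTS ht).2
    rw [hTcard, ← Ordinal.lift_cof]
    exact not_le.1 (lift_le_aleph_one.not.2 h.not_ge)
  have hTc : T.Countable := by
    refine (countable_inter_Iic_of_lt_uncountableCut hsup).mono fun t ht => ?_
    exact ⟨(hTS ht).1, le_csSup ⟨_, fun u hu => (hTS hu).2.le⟩ ht⟩
  rw [← le_aleph0_iff_set_countable, hTcard] at hTc
  exact hTc.not_gt aleph0_lt_aleph_one

theorem cof_uncountableCut : (uncountableCut S).cof = ℵ₁ :=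
  (cof_uncountableCut_le_aleph_one hS hSb).antisymm <|
    succ_aleph0 ▸ succ_le_of_lt (aleph0_lt_cof_uncountableCut hS hSb)

theorem accPt_uncountableCut : AccPt (uncountableCut S) (𝓟 S) := by
  refine SuccOrder.accPt_principal.2 ⟨fun hmin => ?_, fun b hb => ?_⟩
  · refine not_countable_inter_Iio_uncountableCut hS hSb ?_
    simp [Iio_eq_empty_iff.2 hmin]
  · obtain ⟨c, hcS, hbc, hcξ⟩ := exists_mem_Ioo_of_lt_uncountableCut hS hSb hb
    exact ⟨c, hcS, hbc, hcξ⟩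

theorem exists_accPt_mem_Ico_uncountableCut (ha : a < uncountableCut S) :
    ∃ c, AccPt c (𝓟 S) ∧ a ≤ c ∧ c < uncountableCut S := by
  have hinf : (S ∩ Ioo a (uncountableCut S)).Infinite := fun hfin =>
    not_countable_inter_Iio_uncountableCut hS hSb <|
      ((countable_inter_Iic_of_lt_uncountableCut ha).union hfin.countable).mono
        fun b ⟨hbS, hbξ⟩ => (le_or_gt b a).imp (⟨hbS, ·⟩) (⟨hbS, ·, hbξ⟩)
  -- a countably infinite part of `S` above `a` is bounded below `uncountableCut S`,
  -- hence accumulates in the compact interval `[a, b]`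
  set f : ℕ ↪ (S ∩ Ioo a (uncountableCut S) : Set Ordinal) := Set.Infinite.natEmbedding _ hinf
  set T : Set Ordinal := range (Subtype.val ∘ f)
  have hTS : T ⊆ S ∩ Ioo a (uncountableCut S) := range_subset_iff.2 fun n => (f n).2
  obtain ⟨b, -, hbξ, hb⟩ := exists_mem_lt_uncountableCut_forall_lt_of_countable hS hSb
    (countable_range _) fun t ht => (hTS ht).2.2
  have hTinf : T.Infinite := infinite_range_of_injective (Subtype.val_injective.comp f.injective)
  obtain ⟨c, ⟨hac, hcb⟩, hc⟩ := hTinf.exists_accPt_of_subset_isCompact isCompact_Icc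
    fun t ht => ⟨(hTS ht).2.1.le, (hb t ht).le⟩
  exact ⟨c, hc.mono (principal_mono.2 fun t ht => (hTS ht).1), hac, hcb.trans_lt hbξ⟩

end UncountableCut

theorem stmt2 (l : Ordinal) (X : Set Ordinal) (hX : X ⊆ Set.Iic l)
    (D : Set X) (hD : ¬ D.Countable) (hDcl : IsClosed D) (hDdisc : DiscreteTopology D) :
    ∃ ξ ≤ l, ξ.cof = Cardinal.aleph 1 ∧
      (∀ a < ξ, ∃ b ∈ X, b < ξ ∧ a < b) ∧
      ¬ IsStationaryIn (X ∩ Set.Iio ξ) ξ ∧ ξ ∉ X := by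
  set S : Set Ordinal := Subtype.val '' D
  have hSX : S ⊆ X := image_subset_iff.2 fun d _ => d.2
  have hS : ¬ S.Countable := fun h =>
    hD (countable_of_injective_of_countable_image Subtype.val_injective.injOn h)
  have hSb : BddAbove S := ⟨l, fun s hs => hX (hSX hs)⟩
  have hnotAcc (x : Ordinal) (hx : x ∈ X) : ¬ AccPt x (𝓟 S) :=
    not_accPt_image_val_of_isClosed_of_discreteTopology hDcl hDdisc ⟨x, hx⟩
  refine ⟨uncountableCut S, not_lt.1 fun hl => ?_, cof_uncountableCut hS hSb, fun a ha => ?_,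
    fun hstat => ?_, fun hξ => hnotAcc _ hξ (accPt_uncountableCut hS hSb)⟩
  · obtain ⟨b, hbS, hlb, -⟩ := exists_mem_Ioo_of_lt_uncountableCut hS hSb hl
    exact (hX (hSX hbS)).not_gt hlb
  · obtain ⟨b, hbS, hab, hbξ⟩ := exists_mem_Ioo_of_lt_uncountableCut hS hSb ha
    exact ⟨b, hSX hbS, hbξ, hab⟩
  · have hclub : IsClubIn (derivedSet S ∩ Iio (uncountableCut S)) (uncountableCut S) :=
      isClubIn_inter_Iio_of_isClosed (isClosed_derivedSet S)
        fun a ha => exists_accPt_mem_Ico_uncountableCut hS hSb ha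
    obtain ⟨x, ⟨hxX, -⟩, hxS, -⟩ := hstat _ hclub
    exact hnotAcc x hxX hxS
end

section
/- Every subspace X of an ordinal λ + 1 (with the order topology) having countable extent is exponentially separable. -/
/-- A space is exponentially separable. -/
def ExpSep (X : Type*) [TopologicalSpace X] : Prop :=
  ∀ F : Set (Set X), F.Countable → (∀ C ∈ F, IsClosed C) →
    ∃ A : Set X, A.Countable ∧ ∀ G ⊆ F, (⋂₀ G).Nonempty → (A ∩ ⋂₀ G).Nonempty

/-!
Fix a countable family `F` of closed sets of ordinals and induct on `l`; the task is a countable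
`A ⊆ X` meeting `⋂₀ {C ∈ F | x ∈ C}` for each `x ∈ X`. If `cof l ≤ ℵ₀`, then `X` is covered by
`{l}` and countably many segments `Iic c` with `c < l`. Otherwise some `β < l` bounds every member
of `F` that is not cofinal in `l`, and the common accumulation points `K` of the cofinal members
form a closed set unbounded below `l` (a countable closing-off argument). Every point of `K` above
`β` lies in each member of `F` containing a given point of `X` in `(β, l)`, so if `X` meets `K`
above `β`, one point does for all of `X` above `β`. If not, the part of `X` above `β` lies in the
gaps of `K`, which are disjoint and open; by countable extent it meets only countably many of
them, so it is bounded below `l` and the induction hypothesis applies.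
-/

open Set Filter Topology Order

section RelExpSep

variable {α : Type*}

/-- The pointwise form of exponential separability of the subspace `X`, with respect to a family
`F` of sets of the ambient space. -/
def RelExpSep (F : Set (Set α)) (X : Set α) : Prop :=
  ∃ A ⊆ X, A.Countable ∧ ∀ x ∈ X, (A ∩ ⋂₀ {C ∈ F | x ∈ C}).Nonempty

variable {F : Set (Set α)} {X : Set α}

theorem relExpSep_of_countable (hX : X.Countable) : RelExpSep F X :=
  ⟨X, subset_rfl, hX, fun x hx => ⟨x, hx, fun _ hC => hC.2⟩⟩

theorem relExpSep_of_forall_mem_sInter {z : α} (hz : z ∈ X)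
    (h : ∀ x ∈ X, z ∈ ⋂₀ {C ∈ F | x ∈ C}) : RelExpSep F X :=
  ⟨{z}, singleton_subset_iff.2 hz, countable_singleton z, fun x hx => ⟨z, rfl, h x hx⟩⟩

theorem RelExpSep.of_countable_cover {S : Set (Set α)} (hS : S.Countable) (hXS : X ⊆ ⋃₀ S)
    (h : ∀ T ∈ S, RelExpSep F (X ∩ T)) : RelExpSep F X := by
  choose! A hAX hAc hA using h
  refine ⟨⋃ T ∈ S, A T, iUnion₂_subset fun T hT => (hAX T hT).trans inter_subset_left,
    hS.biUnion hAc, fun x hx => ?_⟩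
  obtain ⟨T, hT, hxT⟩ := hXS hx
  obtain ⟨a, ha, haC⟩ := hA T hT x ⟨hx, hxT⟩
  exact ⟨a, mem_biUnion hT ha, haC⟩

theorem expSep_of_forall_relExpSep [TopologicalSpace α]
    (h : ∀ F : Set (Set α), F.Countable → (∀ C ∈ F, IsClosed C) → RelExpSep F X) :
    ExpSep X := by
  intro G hG hGc
  choose! Z hZ hZG using fun C (hC : C ∈ G) => IsInducing.subtypeVal.isClosed_iff.1 (hGc C hC)
  obtain ⟨A, hAX, hA, hAZ⟩ := h (Z '' G) (hG.image Z) (forall_mem_image.2 hZ)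
  refine ⟨(↑) ⁻¹' A, hA.preimage Subtype.val_injective, fun G' hG'G ⟨x, hx⟩ => ?_⟩
  obtain ⟨a, haA, ha⟩ := hAZ x x.2
  refine ⟨⟨a, hAX haA⟩, haA, fun C hC => ?_⟩
  have hCZ := hZG C (hG'G hC)
  have hxZ : x ∈ (↑) ⁻¹' Z C := by rw [hCZ]; exact hx C hC
  rw [← hCZ]
  exact ha _ ⟨mem_image_of_mem Z (hG'G hC), hxZ⟩

end RelExpSep

section CountableExtent

variable {α : Type*} [TopologicalSpace α]

/-- Countable extent of the subspace `Y`, phrased in the ambient space: a subset of `Y` is closed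
and discrete in `Y` iff no point of `Y` is an accumulation point of it. -/
def CountableExtentOn (Y : Set α) : Prop :=
  ∀ D ⊆ Y, (∀ y ∈ Y, Disjoint (𝓝[≠] y) (𝓟 D)) → D.Countable

theorem countableExtentOn_of_subtype {X : Set α}
    (h : ∀ D : Set X, IsClosed D → DiscreteTopology D → D.Countable) : CountableExtentOn X := by
  intro D hDX hD
  have hDX' : IsClosed ((↑) ⁻¹' D : Set X) ∧ IsDiscrete ((↑) ⁻¹' D : Set X) := by
    refine isClosed_and_discrete_iff.2 fun x => ?_
    rw [nhdsWithin_subtype, ← comap_principal]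
    refine disjoint_comap ((hD x x.2).mono_left (nhdsWithin_mono _ ?_))
    rintro _ ⟨y, hy, rfl⟩ hyx
    exact hy (Subtype.ext hyx)
  simpa [inter_eq_right.2 hDX] using (h _ hDX'.1 hDX'.2.to_subtype).image Subtype.val

theorem CountableExtentOn.inter_isClosed {X V : Set α} (hX : CountableExtentOn X)
    (hV : IsClosed V) : CountableExtentOn (X ∩ V) := by
  refine fun D hD hacc => hX D (hD.trans inter_subset_left) fun y hy => ?_
  by_cases hyV : y ∈ V
  · exact hacc y ⟨hy, hyV⟩
  · refine disjoint_principal_right.2 (mem_nhdsWithin_of_mem_nhds ?_)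
    exact mem_of_superset (hV.isOpen_compl.mem_nhds hyV)
      (compl_subset_compl.2 (hD.trans inter_subset_right))

theorem CountableExtentOn.countable_setOf_inter_nonempty [T1Space α] {X : Set α}
    (hX : CountableExtentOn X) {ι : Type*} {I : Set ι} {P : ι → Set α}
    (hP : ∀ i ∈ I, IsOpen (P i)) (hPI : I.PairwiseDisjoint P)
    (hXP : X ⊆ ⋃ i ∈ I, P i) : {i ∈ I | (X ∩ P i).Nonempty}.Countable := by
  set J := {i ∈ I | (X ∩ P i).Nonempty}
  obtain hJ | ⟨i₀, hi₀⟩ := J.eq_empty_or_nonempty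
  · simp [hJ]
  have : Nonempty α := ⟨hi₀.2.some⟩
  choose! d hd using fun i (hi : i ∈ J) => hi.2
  have hPd : ∀ i ∈ I, ∀ j ∈ J, d j ∈ P i → i = j := fun i hi j hj hdj =>
    hPI.elim hi hj.1 (not_disjoint_iff.2 ⟨d j, hdj, (hd j hj).2⟩)
  refine (mapsTo_image d J).countable_of_injOn
    (fun i hi j hj hij => hPd i hi.1 j hj (hij ▸ (hd i hi).2)) (hX _ ?_ fun x hx => ?_)
  · exact image_subset_iff.2 fun i hi => (hd i hi).1
  obtain ⟨i, hi, hxi⟩ := mem_iUnion₂.1 (hXP hx)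
  rw [disjoint_principal_right]
  filter_upwards [nhdsWithin_le_nhds ((hP i hi).mem_nhds hxi),
    nhdsNE_le_cofinite x ((finite_singleton (d i)).compl_mem_cofinite)]
    with y hyi hyd ⟨j, hj, hjy⟩
  subst hjy
  exact hyd (congrArg d (hPd i hi j hj hyi).symm)

end CountableExtent

section Gaps

variable {α : Type*} [ConditionallyCompleteLinearOrder α] {K : Set α}

def gapAbove (K : Set α) (e : α) : Set α := Ioo e (sInf (K ∩ Ioi e))

theorem gapAbove_subset_Iio {e k : α} (hk : k ∈ K) (hek : e < k) : gapAbove K e ⊆ Iio k :=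
  fun _ hx => hx.2.trans_le (csInf_le ⟨e, fun _ h => h.2.le⟩ ⟨hk, hek⟩)

theorem pairwiseDisjoint_gapAbove : K.PairwiseDisjoint (gapAbove K) := by
  have key : ∀ e ∈ K, ∀ e' ∈ K, e < e' → Disjoint (gapAbove K e) (gapAbove K e') :=
    fun e _ e' he' h => disjoint_left.2 fun _ hx hx' =>
      (gapAbove_subset_Iio he' h hx).not_gt hx'.1
  intro e he e' he' hne
  rcases hne.lt_or_gt with h | h
  exacts [key e he e' he' h, (key e' he' e he h).symm]

variable [TopologicalSpace α] [OrderTopology α]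

theorem exists_mem_gapAbove (hK : IsClosed K) {a b x : α} (ha : a ∈ K) (hax : a ≤ x)
    (hb : b ∈ K) (hxb : x ≤ b) (hx : x ∉ K) : ∃ e ∈ K, x ∈ gapAbove K e := by
  have hbelow : K ∩ Iic x ⊆ Iio x := fun k hk => hk.2.lt_of_ne fun h => hx (h ▸ hk.1)
  obtain ⟨heK, hex⟩ := (hK.inter isClosed_Iic).csSup_mem ⟨a, ha, hax⟩ ⟨x, fun _ h => h.2⟩
  set e := sSup (K ∩ Iic x)
  have hex' : e < x := hbelow ⟨heK, hex⟩
  have habove : K ∩ Ioi e = K ∩ Ici x := by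
    ext k
    refine ⟨fun ⟨hk, hek⟩ => ⟨hk, not_lt.1 fun hkx => hek.not_ge ?_⟩,
      fun ⟨hk, hxk⟩ => ⟨hk, hex'.trans_le hxk⟩⟩
    exact le_csSup ⟨x, fun _ h => h.2⟩ ⟨hk, hkx.le⟩
  obtain ⟨hnK, hxn⟩ := (hK.inter isClosed_Ici).csInf_mem ⟨b, hb, hxb⟩ ⟨x, fun _ h => h.2⟩
  refine ⟨e, heK, hex', ?_⟩
  rw [habove]
  exact hxn.lt_of_ne fun h => hx (h ▸ hnK)

end Gaps

section UncountableCof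

variable {α : Type*}

/-- For an ordinal `l` this says `ℵ₀ < l.cof`. -/
def HasUncountableCof [LinearOrder α] (l : α) : Prop :=
  ∀ s ⊆ Iio l, s.Countable → ∃ m < l, s ⊆ Iio m

theorem exists_lt_subset_Iio_of_disjoint [ConditionallyCompleteLinearOrder α] [TopologicalSpace α]
    [OrderTopology α] {l : α} (hl : HasUncountableCof l) {K : Set α} (hK : IsClosed K)
    (hKl : ∀ y < l, ∃ k ∈ K, y < k ∧ k < l) {X : Set α} (hX : CountableExtentOn X)
    (hXl : X ⊆ Iio l) (hXK : Disjoint X K) : ∃ m < l, X ⊆ Iio m := by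
  obtain ⟨m₀, hm₀, -⟩ := hl ∅ (empty_subset _) countable_empty
  obtain ⟨e₀, he₀, -, he₀l⟩ := hKl m₀ hm₀
  have hcover : X ∩ Ici e₀ ⊆ ⋃ e ∈ K ∩ Iio l, gapAbove K e := by
    rintro x ⟨hxX, hx⟩
    obtain ⟨k, hk, hxk, -⟩ := hKl x (hXl hxX)
    obtain ⟨e, he, hxe⟩ := exists_mem_gapAbove hK he₀ hx hk hxk.le (disjoint_left.1 hXK hxX)
    exact mem_biUnion ⟨he, hxe.1.trans (hXl hxX)⟩ hxe
  have hJ := (hX.inter_isClosed isClosed_Ici).countable_setOf_inter_nonempty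
    (fun _ _ => isOpen_Ioo) (pairwiseDisjoint_gapAbove.subset inter_subset_left) hcover
  set J := {e ∈ K ∩ Iio l | (X ∩ Ici e₀ ∩ gapAbove K e).Nonempty}
  choose! k hk hek hkl using fun e (he : e ∈ K ∩ Iio l) => hKl e he.2
  obtain ⟨m, hml, hm⟩ := hl (insert e₀ (k '' J))
    (insert_subset he₀l (image_subset_iff.2 fun e he => hkl e he.1)) ((hJ.image k).insert e₀)
  refine ⟨m, hml, fun x hxX => ?_⟩
  rcases lt_or_ge x e₀ with hxe₀ | hxe₀
  · exact hxe₀.trans (hm (mem_insert _ _))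
  obtain ⟨e, he, hxe⟩ := mem_iUnion₂.1 (hcover ⟨hxX, hxe₀⟩)
  exact (gapAbove_subset_Iio (hk e he) (hek e he) hxe).trans
    (hm (mem_insert_of_mem _ ⟨e, ⟨he, x, ⟨hxX, hxe₀⟩, hxe⟩, rfl⟩))

end UncountableCof

theorem mem_sInter_of_mem_biInter_derivedSet {α : Type*} [TopologicalSpace α] [Preorder α]
    {F : Set (Set α)} (hFc : ∀ C ∈ F, IsClosed C) {β l x z : α}
    (hβ : ∀ C ∈ F, AccPt l (𝓟 C) ∨ Disjoint C (Ioo β l)) (hx : x ∈ Ioo β l)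
    (hz : z ∈ ⋂ C ∈ {C ∈ F | AccPt l (𝓟 C)}, derivedSet C) : z ∈ ⋂₀ {C ∈ F | x ∈ C} := by
  rintro C ⟨hCF, hxC⟩
  rcases hβ C hCF with hacc | hdisj
  · exact (isClosed_iff_derivedSet_subset C).1 (hFc C hCF) (mem_iInter₂.1 hz C ⟨hCF, hacc⟩)
  · exact absurd hx (disjoint_left.1 hdisj hxC)

section Ordinal

variable {F : Set (Set Ordinal)} {l : Ordinal} {X : Set Ordinal}

theorem exists_lt_forall_accPt_or_disjoint (hl : HasUncountableCof l) (hF : F.Countable) :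
    ∃ β < l, ∀ C ∈ F, AccPt l (𝓟 C) ∨ Disjoint C (Ioo β l) := by
  obtain ⟨m, hm, -⟩ := hl ∅ (empty_subset _) countable_empty
  have hbound : ∀ C, ¬ AccPt l (𝓟 C) → ∃ b < l, Disjoint C (Ioo b l) := by
    intro C hC
    rw [SuccOrder.accPt_principal] at hC
    push Not at hC
    obtain ⟨b, hb, hbC⟩ := hC (not_isMin_of_lt hm)
    exact ⟨b, hb, disjoint_iff_inter_eq_empty.2 hbC⟩
  choose! b hb hbC using hbound
  obtain ⟨β, hβl, hβ⟩ := hl (b '' {C ∈ F | ¬ AccPt l (𝓟 C)})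
    (image_subset_iff.2 fun C hC => hb C hC.2) ((hF.mono (sep_subset _ _)).image b)
  refine ⟨β, hβl, fun C hC => or_iff_not_imp_left.2 fun hacc => ?_⟩
  exact (hbC C hacc).mono_right (Ioo_subset_Ioo_left (hβ ⟨C, ⟨hC, hacc⟩, rfl⟩).le)

theorem exists_mem_biInter_derivedSet (hl : HasUncountableCof l) (hF : F.Countable)
    (hacc : ∀ C ∈ F, AccPt l (𝓟 C)) {y : Ordinal} (hy : y < l) :
    ∃ k ∈ ⋂ C ∈ F, derivedSet C, y < k ∧ k < l := by
  have hstep : ∀ z < l, ∃ w < l, z < w ∧ ∀ C ∈ F, (C ∩ Ioo z w).Nonempty := by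
    intro z hz
    choose! c hcC hc using fun C hC => (SuccOrder.accPt_principal.1 (hacc C hC)).2 z hz
    obtain ⟨w, hwl, hw⟩ := hl (insert z (c '' F))
      (insert_subset hz (image_subset_iff.2 fun C hC => (hc C hC).2)) ((hF.image c).insert z)
    exact ⟨w, hwl, hw (mem_insert z _), fun C hC =>
      ⟨c C, hcC C hC, (hc C hC).1, hw (mem_insert_of_mem _ (mem_image_of_mem c hC))⟩⟩
  choose! f hfl hzf hf using hstep
  have hiter : ∀ n, f^[n] y < l := by
    intro n
    induction n with
    | zero => exact hy
    | succ n ih => rw [Function.iterate_succ_apply']; exact hfl _ ih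
  obtain ⟨m, hml, hm⟩ :=
    hl (range fun n => f^[n] y) (range_subset_iff.2 hiter) (countable_range _)
  have hyk : y < Ordinal.nfp f y := (hzf y hy).trans_le (Ordinal.iterate_le_nfp f y 1)
  refine ⟨Ordinal.nfp f y, mem_iInter₂.2 fun C hC => ?_, hyk,
    (Ordinal.nfp_le fun n => (hm ⟨n, rfl⟩).le).trans_lt hml⟩
  rw [mem_derivedSet, SuccOrder.accPt_principal]
  refine ⟨not_isMin_of_lt hyk, fun b hb => ?_⟩
  obtain ⟨n, hn⟩ := Ordinal.lt_nfp_iff.1 hb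
  obtain ⟨c, hcC, hc⟩ := hf _ (hiter n) C hC
  refine ⟨c, hcC, hn.trans hc.1, hc.2.trans_le ?_⟩
  simpa [Function.iterate_succ_apply'] using Ordinal.iterate_le_nfp f y (n + 1)

theorem relExpSep_of_countable_cofinal (s : Set Ordinal) (hs : s.Countable) (hsl : s ⊆ Iio l)
    (hsc : ∀ y < l, ∃ c ∈ s, y ≤ c)
    (ih : ∀ m < l, ∀ Y ⊆ Iic m, CountableExtentOn Y → RelExpSep F Y)
    (hXl : X ⊆ Iic l) (hX : CountableExtentOn X) : RelExpSep F X := by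
  refine .of_countable_cover (S := insert {l} (Iic '' s)) ((hs.image _).insert _)
    (fun x hx => ?_) ?_
  · rcases (mem_Iic.1 (hXl hx)).lt_or_eq with h | rfl
    · obtain ⟨c, hc, hxc⟩ := hsc x h
      exact mem_sUnion_of_mem hxc (mem_insert_of_mem _ (mem_image_of_mem _ hc))
    · exact mem_sUnion_of_mem (mem_singleton x) (mem_insert _ _)
  rintro T (rfl | ⟨c, hc, rfl⟩)
  · exact relExpSep_of_countable ((countable_singleton l).mono inter_subset_right)
  · exact ih c (hsl hc) _ inter_subset_right (hX.inter_isClosed isClosed_Iic)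

theorem relExpSep_of_hasUncountableCof (hF : F.Countable) (hFc : ∀ C ∈ F, IsClosed C)
    (hl : HasUncountableCof l) (ih : ∀ m < l, ∀ Y ⊆ Iic m, CountableExtentOn Y → RelExpSep F Y)
    (hXl : X ⊆ Iic l) (hX : CountableExtentOn X) : RelExpSep F X := by
  obtain ⟨β, hβl, hβ⟩ := exists_lt_forall_accPt_or_disjoint hl hF
  set K := ⋂ C ∈ {C ∈ F | AccPt l (𝓟 C)}, derivedSet C
  have hlK : l ∈ K := mem_iInter₂.2 fun C hC => hC.2
  have hXβ : CountableExtentOn (X ∩ Ioi β) := hX.inter_isClosed (Ici_succ β ▸ isClosed_Ici)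
  refine .of_countable_cover (S := {Iic β, Ioi β}) (by simp) (fun x _ => ?_) ?_
  · rcases le_or_gt x β with h | h
    exacts [mem_sUnion_of_mem h (mem_insert _ _), mem_sUnion_of_mem h (mem_insert_of_mem _ rfl)]
  rintro T (rfl | rfl)
  · exact ih β hβl _ inter_subset_right (hX.inter_isClosed isClosed_Iic)
  by_cases hlX : l ∈ X
  · refine relExpSep_of_forall_mem_sInter ⟨hlX, hβl⟩ fun x hx => ?_
    rcases (mem_Iic.1 (hXl hx.1)).lt_or_eq with h | rfl
    · exact mem_sInter_of_mem_biInter_derivedSet hFc hβ ⟨hx.2, h⟩ hlK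
    · exact fun C hC => hC.2
  have hXβl : X ∩ Ioi β ⊆ Iio l := fun x hx =>
    (mem_Iic.1 (hXl hx.1)).lt_of_ne fun h => hlX (h ▸ hx.1)
  by_cases hXK : (X ∩ Ioi β ∩ K).Nonempty
  · obtain ⟨z, hz, hzK⟩ := hXK
    exact relExpSep_of_forall_mem_sInter hz fun x hx =>
      mem_sInter_of_mem_biInter_derivedSet hFc hβ ⟨hx.2, hXβl hx⟩ hzK
  · obtain ⟨m, hml, hm⟩ := exists_lt_subset_Iio_of_disjoint hl
      (isClosed_biInter fun C _ => isClosed_derivedSet C)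
      (fun _ => exists_mem_biInter_derivedSet hl (hF.mono (sep_subset _ _)) fun _ hC => hC.2)
      hXβ hXβl (disjoint_iff_inter_eq_empty.2 (not_nonempty_iff_eq_empty.1 hXK))
    exact ih m hml _ (hm.trans Iio_subset_Iic_self) hXβ

theorem relExpSep_of_subset_Iic (hF : F.Countable) (hFc : ∀ C ∈ F, IsClosed C) (l : Ordinal) :
    ∀ X ⊆ Iic l, CountableExtentOn X → RelExpSep F X := by
  induction l using WellFoundedLT.induction with
  | _ l ih =>
  intro X hXl hX
  by_cases hl : HasUncountableCof l
  · exact relExpSep_of_hasUncountableCof hF hFc hl ih hXl hX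
  obtain ⟨s, hsl, hs, hsc⟩ : ∃ s ⊆ Iio l, s.Countable ∧ ∀ y < l, ∃ c ∈ s, y ≤ c := by
    simpa [HasUncountableCof, not_subset, not_lt] using hl
  exact relExpSep_of_countable_cofinal s hs hsl hsc ih hXl hX

end Ordinal

theorem stmt3 (l : Ordinal) (X : Set Ordinal) (hX : X ⊆ Set.Iic l)
    (hext : ∀ D : Set X, IsClosed D → DiscreteTopology D → D.Countable) :
    ExpSep X :=
  expSep_of_forall_relExpSep fun _ hF hFc =>
    relExpSep_of_subset_Iic hF hFc l X hX (countableExtentOn_of_subtype hext)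
end

section
/- A countable union of exponentially separable subspaces is exponentially separable: if X is a topological space and X = ⋃ₙ Xₙ where each Xₙ (with the subspace topology) is exponentially separable, then X is exponentially separable. -/
theorem ExpSep.exists_countable_inter_sInter_nonempty {X : Type*} [TopologicalSpace X]
    {S : Set X} (hS : ExpSep S) {F : Set (Set X)} (hF : F.Countable)
    (hF_closed : ∀ C ∈ F, IsClosed C) :
    ∃ A : Set X, A.Countable ∧ ∀ G ⊆ F, (S ∩ ⋂₀ G).Nonempty → (A ∩ ⋂₀ G).Nonempty := by
  let trace : Set X → Set S := fun C => Subtype.val ⁻¹' C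
  have trace_sInter (G : Set (Set X)) : ⋂₀ (trace '' G) = trace (⋂₀ G) := by
    simp only [trace, Set.sInter_image, Set.preimage_sInter]
  obtain ⟨A, hA, hA_meets⟩ := hS (trace '' F) (hF.image trace) <| by
    rintro _ ⟨C, hC, rfl⟩
    exact (hF_closed C hC).preimage continuous_subtype_val
  refine ⟨Subtype.val '' A, hA.image _, fun G hG ⟨x, hxS, hxG⟩ => ?_⟩
  obtain ⟨a, haA, haG⟩ := hA_meets (trace '' G) (Set.image_mono hG)
    ⟨⟨x, hxS⟩, (trace_sInter G).symm ▸ hxG⟩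
  rw [trace_sInter] at haG
  exact ⟨a, Set.mem_image_of_mem _ haA, haG⟩

theorem ExpSep.of_iUnion_eq_univ {X ι : Type*} [TopologicalSpace X] [Countable ι]
    {S : ι → Set X} (hS_cover : ⋃ i, S i = Set.univ) (hS : ∀ i, ExpSep (S i)) : ExpSep X := by
  intro F hF hF_closed
  choose A hA hA_meets using fun i => (hS i).exists_countable_inter_sInter_nonempty hF hF_closed
  refine ⟨⋃ i, A i, Set.countable_iUnion hA, fun G hG ⟨x, hxG⟩ => ?_⟩
  obtain ⟨i, hxS⟩ := Set.mem_iUnion.1 (hS_cover ▸ Set.mem_univ x)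
  obtain ⟨a, haA, haG⟩ := hA_meets i G hG ⟨x, hxS, hxG⟩
  exact ⟨a, Set.mem_iUnion.2 ⟨i, haA⟩, haG⟩

theorem stmt4 (X : Type*) [TopologicalSpace X] (Xn : ℕ → Set X)
    (hcover : (⋃ n, Xn n) = Set.univ)
    (h : ∀ n, ExpSep (Xn n)) : ExpSep X :=
  ExpSep.of_iUnion_eq_univ hcover h
end

section
/- Let X be a Lindelöf space such that the Gδ-topology Xδ on X is also Lindelöf. Then X is exponentially separable. -/
open Set TopologicalSpace Topology

theorem exists_countable_forall_mem_imp_mem_of_lindelofSpace_gδ {X : Type*} [TopologicalSpace X]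
    (h : @LindelofSpace X (generateFrom {s : Set X | IsGδ s})) {F : Set (Set X)}
    (hF : F.Countable) (hcl : ∀ C ∈ F, IsClosed C) :
    ∃ A : Set X, A.Countable ∧ ∀ y, ∃ a ∈ A, ∀ C ∈ F, y ∈ C → a ∈ C := by
  set U : X → Set X := fun x => ⋂ C ∈ {C ∈ F | x ∉ C}, Cᶜ
  have hU_isOpen (x : X) : IsOpen[generateFrom {s | IsGδ s}] (U x) :=
    .basic _ <| IsGδ.biInter_of_isOpen (hF.mono (sep_subset _ _))
      fun C hC => (hcl C hC.1).isOpen_compl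
  have hU_mem (x : X) : x ∈ U x := mem_iInter₂.2 fun _ hC => hC.2
  obtain ⟨A, hA, hcover⟩ := @LindelofSpace.elim_nhds_subcover X (generateFrom _) h U
    fun x => @IsOpen.mem_nhds _ (generateFrom _) _ _ (hU_isOpen x) (hU_mem x)
  refine ⟨A, hA, fun y => ?_⟩
  obtain ⟨a, haA, hya⟩ := mem_iUnion₂.1 (hcover ▸ mem_univ y)
  refine ⟨a, haA, fun C hC hyC => ?_⟩
  by_contra haC
  exact mem_iInter₂.1 hya C ⟨hC, haC⟩ hyC

theorem stmt9_general (X : Type*) [TopologicalSpace X]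
    (h : @LindelofSpace X (TopologicalSpace.generateFrom {s : Set X | IsGδ s})) :
    ExpSep X := by
  intro F hF hcl
  obtain ⟨A, hA, hmem⟩ := exists_countable_forall_mem_imp_mem_of_lindelofSpace_gδ h hF hcl
  refine ⟨A, hA, fun G hGF ⟨y, hy⟩ => ?_⟩
  obtain ⟨a, haA, ha⟩ := hmem y
  exact ⟨a, haA, fun C hC => ha C (hGF hC) (hy C hC)⟩

theorem stmt9 (X : Type*) [TopologicalSpace X] [LindelofSpace X]
    (h : @LindelofSpace X (TopologicalSpace.generateFrom {s : Set X | IsGδ s})) :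
    ExpSep X :=
  stmt9_general X h
end

section
/- Every Lindelöf P-space is exponentially separable. -/
open Set

theorem isGδ_setOf_forall_mem_imp_mem {X : Type*} [TopologicalSpace X] {F : Set (Set X)}
    (hFc : F.Countable) (hF : ∀ C ∈ F, IsClosed C) (x : X) :
    IsGδ {y | ∀ C ∈ F, y ∈ C → x ∈ C} := by
  have h : {y | ∀ C ∈ F, y ∈ C → x ∈ C} = ⋂ C ∈ {C ∈ F | x ∉ C}, Cᶜ := by
    ext y
    simp only [mem_ofPred_eq, mem_iInter, mem_compl_iff, and_imp]
    exact forall₂_congr fun C _ => not_imp_not.symm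
  rw [h]
  exact IsGδ.biInter_of_isOpen (hFc.mono (sep_subset _ _)) fun C hC => (hF C hC.1).isOpen_compl

theorem stmt10 (X : Type*) [TopologicalSpace X] [LindelofSpace X]
    (hP : ∀ s : Set X, IsGδ s → IsOpen s) : ExpSep X := by
  intro F hFc hF
  obtain ⟨A, hAc, hcover⟩ := countable_cover_nhds fun x =>
    (hP _ (isGδ_setOf_forall_mem_imp_mem hFc hF x)).mem_nhds fun _ _ hx => hx
  refine ⟨A, hAc, fun G hGF ⟨y, hy⟩ => ?_⟩
  obtain ⟨x, hxA, hyx⟩ := mem_iUnion₂.1 (hcover ▸ mem_univ y)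
  exact ⟨x, hxA, fun C hC => hyx C (hGF hC) (hy C hC)⟩
end

section
/- Let T be a tree (a partial order in which the set of predecessors of each element is well-ordered) that is rooted and Hausdorff, and such that for any two incomparable elements s, t the set of common strict predecessors has a maximal element s ∧ t. Let ≺ be any linear order on T. Define s ≤ t iff s ⊑ t, or s and t are incomparable and the immediate successor of s∧t below s strictly ≺-precedes the immediate successor of s∧t below t. Then ≤ is a linear order on T. -/
/-! For incomparable `s, t`, the points `s ∧ t`, `s_{s∧t}`, `t_{s∧t}` are characterised by
local conditions: a point `m` covered by two distinct points `a ≤ s` and `b ≤ t`. Once every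
down-set `Iic w` is a chain, such a branching is unique, and a branching of `s, t` is also one
of `s, u` for every `u ≥ t`. Transitivity then reduces to comparing the branching points of
`s, t` and of `t, u`, which are comparable since both lie below `t`: if they coincide, the two
successors of that point below `t` agree; otherwise the lower one is the branching point of
`s, u`. -/

section

variable {T : Type*} [PartialOrder T]

theorem isChain_Iic_of_forall_Iio
    (hchain : ∀ x : T, ∀ y ∈ Set.Iio x, ∀ z ∈ Set.Iio x, y ≤ z ∨ z ≤ y) (w : T) :
    IsChain (· ≤ ·) (Set.Iic w) := by
  rw [← Set.Iio_insert]
  exact IsChain.insert (fun y hy z hz _ => hchain w y hy z hz) fun y hy _ => Or.inr (le_of_lt hy)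

theorem CovBy.le_of_lt_of_le (hT : ∀ w : T, IsChain (· ≤ ·) (Set.Iic w)) {m a x w : T}
    (h : m ⋖ a) (hmx : m < x) (hx : x ≤ w) (ha : a ≤ w) : a ≤ x := by
  rcases (hT w).total ha hx with hax | hxa
  · exact hax
  · rcases hxa.eq_or_lt with rfl | hxa
    · exact le_rfl
    · exact absurd hxa (h.2 hmx)

/-- In a tree, `IsBranching s t m a b` holds exactly when `s ⊥ t`, `m = s ∧ t`, `a = s_{s∧t}`
and `b = t_{s∧t}`. -/
structure IsBranching (s t m a b : T) : Prop where
  covBy_left : m ⋖ a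
  le_left : a ≤ s
  covBy_right : m ⋖ b
  le_right : b ≤ t
  ne : a ≠ b

namespace IsBranching

variable {s t u m a b : T}

theorem symm (h : IsBranching s t m a b) : IsBranching t s m b a :=
  ⟨h.covBy_right, h.le_right, h.covBy_left, h.le_left, h.ne.symm⟩

theorem of_le_left (h : IsBranching t u m a b) (has : a ≤ s) : IsBranching s u m a b :=
  { h with le_left := has }

theorem of_le_right (h : IsBranching s t m a b) (hbu : b ≤ u) : IsBranching s u m a b :=
  { h with le_right := hbu }

variable (hT : ∀ w : T, IsChain (· ≤ ·) (Set.Iic w))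
include hT

theorem not_le_right_of_left (h : IsBranching s t m a b) : ¬ a ≤ t := fun hat =>
  h.ne <| le_antisymm (h.covBy_left.le_of_lt_of_le hT h.covBy_right.lt h.le_right hat)
    (h.covBy_right.le_of_lt_of_le hT h.covBy_left.lt hat h.le_right)

theorem not_le (h : IsBranching s t m a b) : ¬ s ≤ t := fun hst =>
  h.not_le_right_of_left hT (h.le_left.trans hst)

theorem le_of_le_of_le (h : IsBranching s t m a b) {z : T} (hzs : z ≤ s) (hzt : z ≤ t) :
    z ≤ m := by
  have hms : m ≤ s := h.covBy_left.lt.le.trans h.le_left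
  rcases (hT s).total hzs hms with hzm | hmz
  · exact hzm
  rcases hmz.eq_or_lt with rfl | hmz
  · exact le_rfl
  exact absurd ((h.covBy_left.le_of_lt_of_le hT hmz hzs h.le_left).trans hzt)
    (h.not_le_right_of_left hT)

theorem unique {m' a' b' : T} (h : IsBranching s t m a b) (h' : IsBranching s t m' a' b') :
    m = m' ∧ a = a' ∧ b = b' := by
  have hm : m = m' := le_antisymm
    (h'.le_of_le_of_le hT (h.covBy_left.lt.le.trans h.le_left)
      (h.covBy_right.lt.le.trans h.le_right))
    (h.le_of_le_of_le hT (h'.covBy_left.lt.le.trans h'.le_left)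
      (h'.covBy_right.lt.le.trans h'.le_right))
  subst hm
  exact ⟨rfl,
    le_antisymm (h.covBy_left.le_of_lt_of_le hT h'.covBy_left.lt h'.le_left h.le_left)
      (h'.covBy_left.le_of_lt_of_le hT h.covBy_left.lt h.le_left h'.le_left),
    le_antisymm (h.covBy_right.le_of_lt_of_le hT h'.covBy_right.lt h'.le_right h.le_right)
      (h'.covBy_right.le_of_lt_of_le hT h.covBy_right.lt h.le_right h'.le_right)⟩

theorem le_or_of_le_left (h : IsBranching t u m a b) (hst : s ≤ t) :
    s ≤ u ∨ IsBranching s u m a b := by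
  rcases (hT t).total (h.covBy_left.lt.le.trans h.le_left) hst with hms | hsm
  · rcases hms.eq_or_lt with rfl | hms
    · exact Or.inl (h.covBy_right.lt.le.trans h.le_right)
    · exact Or.inr (h.of_le_left (h.covBy_left.le_of_lt_of_le hT hms hst h.le_left))
  · exact Or.inl (hsm.trans (h.covBy_right.lt.le.trans h.le_right))

end IsBranching

def TreeLex (r : T → T → Prop) (s t : T) : Prop :=
  s ≤ t ∨ ∃ m a b, IsBranching s t m a b ∧ r a b

section TreeLex

variable {r : T → T → Prop}

theorem treeLex_refl (s : T) : TreeLex r s s := Or.inl le_rfl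

theorem treeLex_of_isBranching_of_isBranching [IsTrans T r] [Std.Irrefl r]
    (hT : ∀ w : T, IsChain (· ≤ ·) (Set.Iic w)) {s t u m a b m' a' b' : T}
    (hst : IsBranching s t m a b) (hab : r a b) (htu : IsBranching t u m' a' b') (hab' : r a' b') :
    TreeLex r s u := by
  have hmt : m < t := hst.covBy_right.lt.trans_le hst.le_right
  have hm't : m' < t := htu.covBy_left.lt.trans_le htu.le_left
  rcases eq_or_ne m m' with rfl | hne
  · have hba' : b = a' := le_antisymm
      (hst.covBy_right.le_of_lt_of_le hT htu.covBy_left.lt htu.le_left hst.le_right)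
      (htu.covBy_left.le_of_lt_of_le hT hst.covBy_right.lt hst.le_right htu.le_left)
    subst hba'
    have hab'' : r a b' := trans_of r hab hab'
    refine Or.inr ⟨m, a, b', ⟨hst.covBy_left, hst.le_left, htu.covBy_right, htu.le_right, ?_⟩,
      hab''⟩
    rintro rfl
    exact irrefl_of r a hab''
  rcases (hT t).total hmt.le hm't.le with hmm' | hm'm
  · have hbm' : b ≤ m' :=
      hst.covBy_right.le_of_lt_of_le hT (hmm'.lt_of_ne hne) hm't.le hst.le_right
    exact Or.inr ⟨m, a, b, hst.of_le_right (hbm'.trans htu.covBy_right.lt.le |>.trans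
      htu.le_right), hab⟩
  · have ha'm : a' ≤ m :=
      htu.covBy_left.le_of_lt_of_le hT (hm'm.lt_of_ne hne.symm) hmt.le htu.le_left
    exact Or.inr ⟨m', a', b', htu.of_le_left (ha'm.trans hst.covBy_left.lt.le |>.trans
      hst.le_left), hab'⟩

theorem treeLex_trans [IsTrans T r] [Std.Irrefl r] (hT : ∀ w : T, IsChain (· ≤ ·) (Set.Iic w))
    {s t u : T} (hst : TreeLex r s t) (htu : TreeLex r t u) : TreeLex r s u := by
  rcases hst with hst | ⟨m, a, b, hst, hab⟩ <;>
    rcases htu with htu | ⟨m', a', b', htu, hab'⟩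
  · exact Or.inl (hst.trans htu)
  · exact (htu.le_or_of_le_left hT hst).imp_right fun h => ⟨m', a', b', h, hab'⟩
  · exact Or.inr ⟨m, a, b, hst.of_le_right (hst.le_right.trans htu), hab⟩
  · exact treeLex_of_isBranching_of_isBranching hT hst hab htu hab'

theorem treeLex_antisymm [Std.Asymm r] (hT : ∀ w : T, IsChain (· ≤ ·) (Set.Iic w)) {s t : T}
    (hst : TreeLex r s t) (hts : TreeLex r t s) : s = t := by
  rcases hst with hst | ⟨m, a, b, hst, hab⟩ <;> rcases hts with hts | ⟨m', b', a', hts, hba⟩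
  · exact le_antisymm hst hts
  · exact absurd hst (hts.symm.not_le hT)
  · exact absurd hts (hst.symm.not_le hT)
  · obtain ⟨-, rfl, rfl⟩ := hst.unique hT hts.symm
    exact absurd hba (asymm_of r hab)

theorem treeLex_total [Std.Trichotomous r]
    (hbr : ∀ s t : T, ¬ s ≤ t → ¬ t ≤ s → ∃ m a b, IsBranching s t m a b) (s t : T) :
    TreeLex r s t ∨ TreeLex r t s := by
  by_cases hst : s ≤ t
  · exact Or.inl (Or.inl hst)
  by_cases hts : t ≤ s
  · exact Or.inr (Or.inl hts)
  obtain ⟨m, a, b, h⟩ := hbr s t hst hts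
  rcases trichotomous_of r a b with hab | rfl | hba
  · exact Or.inl (Or.inr ⟨m, a, b, h, hab⟩)
  · exact absurd rfl h.ne
  · exact Or.inr (Or.inr ⟨m, b, a, h.symm, hba⟩)

end TreeLex

theorem isBranching_meet_step {meet step : T → T → T}
    (hmeet : ∀ s t : T, ¬ s ≤ t → ¬ t ≤ s →
      meet s t < s ∧ meet s t < t ∧ ∀ z, z < s → z < t → z ≤ meet s t)
    (hstep : ∀ s t : T, ¬ s ≤ t → ¬ t ≤ s →
      meet s t < step s t ∧ step s t ≤ s ∧ ∀ z, meet s t < z → z ≤ s → step s t ≤ z)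
    {s t : T} (hst : ¬ s ≤ t) (hts : ¬ t ≤ s) :
    IsBranching s t (meet s t) (step s t) (step t s) := by
  have covBy_step : ∀ {s t}, ¬ s ≤ t → ¬ t ≤ s → meet s t ⋖ step s t := fun hst hts =>
    have ⟨hm, hs, hmin⟩ := hstep _ _ hst hts
    ⟨hm, fun z hmz hz => hz.not_ge (hmin z hmz (hz.le.trans hs))⟩
  obtain ⟨hms, hmt, hmax⟩ := hmeet s t hst hts
  obtain ⟨hmt', hms', hmax'⟩ := hmeet t s hts hst
  have meet_comm : meet t s = meet s t := le_antisymm (hmax _ hms' hmt') (hmax' _ hmt hms)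
  have hstep_s := (hstep s t hst hts).2.1
  have hstep_t := (hstep t s hts hst).2.1
  refine ⟨covBy_step hst hts, hstep_s, meet_comm ▸ covBy_step hts hst, hstep_t, fun h => ?_⟩
  have hlt_s : step s t < s := hstep_s.lt_of_ne fun h' => hst (h' ▸ h ▸ hstep_t)
  have hlt_t : step s t < t := (h ▸ hstep_t).lt_of_ne fun h' => hts (h' ▸ hstep_s)
  exact (hmax _ hlt_s hlt_t).not_gt (covBy_step hst hts).lt

theorem treeLex_iff_of_isBranching {r : T → T → Prop} {meet step : T → T → T}
    (hT : ∀ w : T, IsChain (· ≤ ·) (Set.Iic w))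
    (hbr : ∀ s t : T, ¬ s ≤ t → ¬ t ≤ s →
      IsBranching s t (meet s t) (step s t) (step t s)) {s t : T} :
    TreeLex r s t ↔ s ≤ t ∨ (¬ s ≤ t ∧ ¬ t ≤ s ∧ r (step s t) (step t s)) := by
  refine or_congr_right ⟨fun ⟨m, a, b, h, hab⟩ => ?_,
    fun ⟨hst, hts, hab⟩ => ⟨_, _, _, hbr s t hst hts, hab⟩⟩
  have hst := h.not_le hT
  have hts := h.symm.not_le hT
  obtain ⟨-, rfl, rfl⟩ := (hbr s t hst hts).unique hT h
  exact ⟨hst, hts, hab⟩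

end

theorem stmt12_general (T : Type*) [PartialOrder T]
    (hchain : ∀ x : T, ∀ y ∈ Set.Iio x, ∀ z ∈ Set.Iio x, y ≤ z ∨ z ≤ y)
    -- meets of incomparable elements exist
    (meet : T → T → T)
    (hmeet : ∀ s t : T, ¬ s ≤ t → ¬ t ≤ s →
      meet s t < s ∧ meet s t < t ∧ ∀ z, z < s → z < t → z ≤ meet s t)
    -- the immediate successor of `meet s t` below `s`
    (step : T → T → T)
    (hstep : ∀ s t : T, ¬ s ≤ t → ¬ t ≤ s →
      meet s t < step s t ∧ step s t ≤ s ∧ ∀ z, meet s t < z → z ≤ s → step s t ≤ z)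
    -- an arbitrary linear (strict total) order on T
    (prec : T → T → Prop) [IsStrictTotalOrder T prec]
    -- the lexicographic order
    (le' : T → T → Prop)
    (hle' : ∀ s t, le' s t ↔ s ≤ t ∨ (¬ s ≤ t ∧ ¬ t ≤ s ∧ prec (step s t) (step t s))) :
    (∀ s, le' s s) ∧ (∀ s t u, le' s t → le' t u → le' s u) ∧
      (∀ s t, le' s t → le' t s → s = t) ∧ (∀ s t, le' s t ∨ le' t s) := by
  have hT := isChain_Iic_of_forall_Iio hchain
  have hbr := fun s t => isBranching_meet_step hmeet hstep (s := s) (t := t)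
  obtain rfl : le' = TreeLex prec := by
    ext s t
    rw [hle', treeLex_iff_of_isBranching hT hbr]
  exact ⟨treeLex_refl, fun _ _ _ => treeLex_trans hT, fun _ _ => treeLex_antisymm hT,
    treeLex_total fun s t hst hts => ⟨_, _, _, hbr s t hst hts⟩⟩

/-- The lexicographic order on a rooted Hausdorff tree with meets is a linear order.
`meet s t` is the maximal common strict predecessor of incomparable `s, t`, and
`step s t` is the immediate successor of `meet s t` lying below (or equal to) `s`. -/
theorem stmt12 (T : Type*) [PartialOrder T]
    -- tree: predecessor sets are well-ordered
    (hWF : ∀ x : T, (Set.Iio x).IsWF)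
    (hchain : ∀ x : T, ∀ y ∈ Set.Iio x, ∀ z ∈ Set.Iio x, y ≤ z ∨ z ≤ y)
    -- rooted
    (hroot : ∃ r : T, ∀ x, r ≤ x)
    -- Hausdorff: at limit levels, elements are determined by their predecessors
    (hHaus : ∀ x y : T, (¬ ∃ p, p < x ∧ ∀ z, z < x → z ≤ p) → Set.Iio x = Set.Iio y → x = y)
    -- meets of incomparable elements exist
    (meet : T → T → T)
    (hmeet : ∀ s t : T, ¬ s ≤ t → ¬ t ≤ s →
      meet s t < s ∧ meet s t < t ∧ ∀ z, z < s → z < t → z ≤ meet s t)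
    -- the immediate successor of `meet s t` below `s`
    (step : T → T → T)
    (hstep : ∀ s t : T, ¬ s ≤ t → ¬ t ≤ s →
      meet s t < step s t ∧ step s t ≤ s ∧ ∀ z, meet s t < z → z ≤ s → step s t ≤ z)
    -- an arbitrary linear (strict total) order on T
    (prec : T → T → Prop) [IsStrictTotalOrder T prec]
    -- the lexicographic order
    (le' : T → T → Prop)
    (hle' : ∀ s t, le' s t ↔ s ≤ t ∨ (¬ s ≤ t ∧ ¬ t ≤ s ∧ prec (step s t) (step t s))) :
    (∀ s, le' s s) ∧ (∀ s t u, le' s t → le' t u → le' s u) ∧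
      (∀ s t, le' s t → le' t s → s = t) ∧ (∀ s t, le' s t ∨ le' t s) :=
  stmt12_general T hchain meet hmeet step hstep prec le' hle'
end

section
/- Let T be a normal tree with its tree topology τ, and let ≤ be the lexicographic linear order on T induced by a well-order ≺ of T (s ≤ t iff s ⊑ t, or s ⊥ t and s_{s∧t} ≺ t_{s∧t}). Then for every t ∈ T, the sets U = {s ∈ T : t < s} and V = {s ∈ T : s < t} are open in the tree topology; hence the identity map from (T, τ) to T with the order topology of ≤ is continuous. -/
open Topology

/-- For a normal tree `T` with lexicographic order induced by a well-order `prec`,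
every open ray of the lexicographic order is open in the tree topology; hence the
identity map from the tree topology to the order topology of the lexicographic order
is continuous. -/
theorem stmt13 (T : Type*) [PartialOrder T]
    -- tree: predecessor sets are well-ordered
    (hWF : ∀ x : T, (Set.Iio x).IsWF)
    (hchain : ∀ x : T, ∀ y ∈ Set.Iio x, ∀ z ∈ Set.Iio x, y ≤ z ∨ z ≤ y)
    -- normality: rooted
    (hroot : ∃ r : T, ∀ x, r ≤ x)
    -- normality: splitting (every element has two distinct immediate successors)
    (hsplit : ∀ x : T, ∃ y z : T, x ⋖ y ∧ x ⋖ z ∧ y ≠ z)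
    -- normality: pruned (every element has strict successors)
    (hpruned : ∀ x : T, ∃ y : T, x < y)
    -- normality: Hausdorff (at limit levels, elements are determined by predecessors)
    (hHaus : ∀ x y : T, (¬ ∃ p, p < x ∧ ∀ z, z < x → z ≤ p) → Set.Iio x = Set.Iio y → x = y)
    -- meets of incomparable elements exist
    (meet : T → T → T)
    (hmeet : ∀ s t : T, ¬ s ≤ t → ¬ t ≤ s →
      meet s t < s ∧ meet s t < t ∧ ∀ z, z < s → z < t → z ≤ meet s t)
    -- the immediate successor of `meet s t` below `s`
    (step : T → T → T)
    (hstep : ∀ s t : T, ¬ s ≤ t → ¬ t ≤ s →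
      meet s t < step s t ∧ step s t ≤ s ∧ ∀ z, meet s t < z → z ≤ s → step s t ≤ z)
    -- a well-order on T
    (prec : T → T → Prop) [IsWellOrder T prec]
    -- the strict lexicographic order
    (ltlex : T → T → Prop)
    (hltlex : ∀ s t, ltlex s t ↔ s < t ∨ (¬ s ≤ t ∧ ¬ t ≤ s ∧ prec (step s t) (step t s)))
    -- the tree topology
    (τ : TopologicalSpace T)
    (hτ : τ = TopologicalSpace.generateFrom
      ({S : Set T | ∃ x : T, S = Set.Iio x} ∪ {S : Set T | ∃ x : T, S = Set.Ioi x}))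
    -- the order topology of the lexicographic order
    (σ : TopologicalSpace T)
    (hσ : σ = TopologicalSpace.generateFrom
      ({S : Set T | ∃ a : T, S = {b | ltlex a b}} ∪ {S : Set T | ∃ a : T, S = {b | ltlex b a}})) :
    (∀ t : T, IsOpen[τ] {s | ltlex t s} ∧ IsOpen[τ] {s | ltlex s t}) ∧
      Continuous[τ, σ] id := by
  subst hτ hσ
  set B : Set (Set T) := ({S : Set T | ∃ x : T, S = Set.Iio x} ∪ {S : Set T | ∃ x : T, S = Set.Ioi x}) with hB
  have key : ∀ U : Set T, (∀ s ∈ U, ∃ W, TopologicalSpace.GenerateOpen B W ∧ s ∈ W ∧ W ⊆ U) →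
      TopologicalSpace.GenerateOpen B U := by
    intro U h
    have hU : U = ⋃₀ {W | TopologicalSpace.GenerateOpen B W ∧ W ⊆ U} := by
      apply Set.Subset.antisymm
      · intro s hs
        obtain ⟨W, h1, h2, h3⟩ := h s hs
        exact ⟨W, ⟨h1, h3⟩, h2⟩
      · rintro s ⟨W, ⟨_, h3⟩, h2⟩
        exact h3 h2
    rw [hU]
    exact TopologicalSpace.GenerateOpen.sUnion _ fun W hW => hW.1
  have core : ∀ s t : T, ¬ s ≤ t → ¬ t ≤ s → ∀ s', meet s t < s' → (s' ≤ s ∨ s ≤ s') →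
      ¬ s' ≤ t ∧ ¬ t ≤ s' ∧ step s' t = step s t ∧ step t s' = step t s := by
    intro s t hns hnt s' hm hcomp
    obtain ⟨hm1, hm2, hm3⟩ := hmeet s t hns hnt
    obtain ⟨hs1, hs2, hs3⟩ := hstep s t hns hnt
    have h2 : ¬ s' ≤ t := by
      intro hle
      rcases hcomp with h | h
      · have hstle : step s t ≤ s' := hs3 s' hm h
        have hstt : step s t ≤ t := hstle.trans hle
        rcases lt_or_eq_of_le hs2 with h' | h'
        · rcases lt_or_eq_of_le hstt with h'' | h''
          · exact absurd (hm3 _ h' h'') hs1.not_ge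
          · exact hnt (by rw [← h'']; exact hs2)
        · exact hns (by rw [← h']; exact hstt)
      · exact hns (h.trans hle)
    have h3 : ¬ t ≤ s' := by
      intro hle
      rcases hcomp with h | h
      · exact hnt (hle.trans h)
      · rcases eq_or_lt_of_le hle with h' | h'
        · exact hns (h.trans h'.ge)
        · rcases eq_or_lt_of_le h with hss | hss
          · exact hnt (hle.trans hss.ge)
          · rcases hchain s' t h' s hss with h'' | h''
            · exact hnt h''
            · exact hns h''
    have belowS : ∀ w : T, w < s' → w < t → w < s := by
      intro w hw1 hw2
      rcases hcomp with h | h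
      · exact lt_of_lt_of_le hw1 h
      · rcases eq_or_lt_of_le h with hss | hss
        · rw [hss]; exact hw1
        · rcases hchain s' w hw1 s hss with h'' | h''
          · rcases eq_or_lt_of_le h'' with he | he
            · exact absurd (le_of_lt (by rw [← he]; exact hw2)) hns
            · exact he
          · exact absurd (le_of_lt (lt_of_le_of_lt h'' hw2)) hns
    obtain ⟨hm1', hm2', hm3'⟩ := hmeet s' t h2 h3
    have hms : meet s' t < s := belowS _ hm1' hm2'
    have hmeq : meet s' t = meet s t := le_antisymm (hm3 _ hms hm2') (hm3' _ hm hm2)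
    have h5 : step s t ≤ s' := by
      rcases hcomp with h | h
      · exact hs3 s' hm h
      · exact hs2.trans h
    obtain ⟨ht1', ht2', ht3'⟩ := hstep s' t h2 h3
    have h6a : step s' t ≤ step s t := ht3' _ (by rw [hmeq]; exact hs1) h5
    have h6b : step s t ≤ step s' t := hs3 _ (by rw [← hmeq]; exact ht1') (h6a.trans hs2)
    obtain ⟨hn1, hn2, hn3⟩ := hmeet t s hnt hns
    obtain ⟨hn1', hn2', hn3'⟩ := hmeet t s' h3 h2
    have hnts : meet t s = meet s t := le_antisymm (hm3 _ hn2 hn1) (hn3 _ hm2 hm1)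
    have hns'lt : meet t s' < s := belowS _ hn2' hn1'
    have hnts' : meet t s' = meet s t := le_antisymm (hm3 _ hns'lt hn1') (hn3' _ hm2 hm)
    obtain ⟨hu1, hu2, hu3⟩ := hstep t s hnt hns
    obtain ⟨hu1', hu2', hu3'⟩ := hstep t s' h3 h2
    have h8a : step t s' ≤ step t s := hu3' _ (by rw [hnts', ← hnts]; exact hu1) hu2
    have h8b : step t s ≤ step t s' := hu3 _ (by rw [hnts, ← hnts']; exact hu1') hu2'
    exact ⟨h2, h3, le_antisymm h6a h6b, le_antisymm h8b h8a ▸ rfl⟩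
  have hrays : ∀ t : T, TopologicalSpace.GenerateOpen B {s | ltlex t s} ∧
      TopologicalSpace.GenerateOpen B {s | ltlex s t} := by
    intro t
    constructor
    · apply key
      intro s hsU
      rcases (hltlex t s).mp hsU with hlt | ⟨hnts, hnst, hp⟩
      · exact ⟨Set.Ioi t, .basic _ (Or.inr ⟨t, rfl⟩), hlt,
          fun s' hs' => (hltlex t s').mpr (Or.inl hs')⟩
      · obtain ⟨x, hx⟩ := hpruned s
        refine ⟨Set.Ioi (meet s t) ∩ Set.Iio x, ?_, ?_, ?_⟩
        · exact .inter _ _ (.basic _ (Or.inr ⟨_, rfl⟩)) (.basic _ (Or.inl ⟨_, rfl⟩))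
        · exact ⟨(hmeet s t hnst hnts).1, hx⟩
        · rintro s' ⟨h1, h2⟩
          have hcomp : s' ≤ s ∨ s ≤ s' := hchain x s' h2 s hx
          obtain ⟨c1, c2, c3, c4⟩ := core s t hnst hnts s' h1 hcomp
          exact (hltlex t s').mpr (Or.inr ⟨c2, c1, by rw [c4, c3]; exact hp⟩)
    · apply key
      intro s hsV
      rcases (hltlex s t).mp hsV with hlt | ⟨hns, hnt, hp⟩
      · exact ⟨Set.Iio t, .basic _ (Or.inl ⟨t, rfl⟩), hlt,
          fun s' hs' => (hltlex s' t).mpr (Or.inl hs')⟩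
      · obtain ⟨x, hx⟩ := hpruned s
        refine ⟨Set.Ioi (meet s t) ∩ Set.Iio x, ?_, ?_, ?_⟩
        · exact .inter _ _ (.basic _ (Or.inr ⟨_, rfl⟩)) (.basic _ (Or.inl ⟨_, rfl⟩))
        · exact ⟨(hmeet s t hns hnt).1, hx⟩
        · rintro s' ⟨h1, h2⟩
          have hcomp : s' ≤ s ∨ s ≤ s' := hchain x s' h2 s hx
          obtain ⟨c1, c2, c3, c4⟩ := core s t hns hnt s' h1 hcomp
          exact (hltlex s' t).mpr (Or.inr ⟨c1, c2, by rw [c3, c4]; exact hp⟩)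
  refine ⟨fun t => ⟨(hrays t).1, (hrays t).2⟩, ?_⟩
  rw [continuous_generateFrom_iff]
  rintro S (⟨a, rfl⟩ | ⟨a, rfl⟩)
  · exact (hrays a).1
  · exact (hrays a).2
end

section
/- Let Y be a topological space such that X = ω ⊕ Y (the disjoint union of a countable discrete set and Y, with Y closed in X and ω a set of isolated points of X, and such that the subspace topology on Y from X coincides with the topology of Y). If Y is exponentially separable, then X is exponentially separable. -/
open Set

theorem ExpSep.of_continuous_of_countable_compl_range {X Y : Type*} [TopologicalSpace X]
    [TopologicalSpace Y] {f : Y → X} (hY : ExpSep Y) (hf : Continuous f)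
    (hc : (range f)ᶜ.Countable) : ExpSep X := by
  intro F hFc hFcl
  obtain ⟨B, hBc, hB⟩ := hY (preimage f '' F) (hFc.image _)
    (forall_mem_image.2 fun C hC => (hFcl C hC).preimage hf)
  refine ⟨(range f)ᶜ ∪ f '' B, hc.union (hBc.image f), ?_⟩
  rintro G hG ⟨x, hx⟩
  by_cases hxf : x ∈ range f
  · obtain ⟨y, rfl⟩ := hxf
    obtain ⟨b, hbB, hbG⟩ := hB (preimage f '' G) (image_mono hG) ⟨y, forall_mem_image.2 hx⟩
    exact ⟨f b, Or.inr (mem_image_of_mem f hbB), fun C hC => hbG _ (mem_image_of_mem _ hC)⟩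
  · exact ⟨x, Or.inl hxf, hx⟩

theorem stmt15 (Y : Type*) [TopologicalSpace Y] (h : ExpSep Y) : ExpSep (ℕ ⊕ Y) :=
  h.of_continuous_of_countable_compl_range continuous_inr <|
    isCompl_range_inl_range_inr.symm.compl_eq ▸ countable_range Sum.inl
end

section
/- Let X be an uncountable topological space in which every closed subset is either countable or has countable complement. Then X is exponentially separable. -/
open Set

section

variable {X : Type*}

theorem Set.Countable.compl_sInter_of_forall {F : Set (Set X)} (hF : F.Countable)
    (hco : ∀ C ∈ F, Cᶜ.Countable) : (⋂₀ F)ᶜ.Countable := by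
  rw [compl_sInter]
  exact (hF.image _).sUnion (by rintro _ ⟨C, hC, rfl⟩; exact hco C hC)

theorem Set.nonempty_of_countable_compl [Uncountable X] {s : Set X} (hs : sᶜ.Countable) :
    s.Nonempty := by
  rw [nonempty_iff_ne_empty]
  rintro rfl
  exact not_countable_univ (by simpa using hs)

theorem exists_countable_inter_sInter_nonempty_of_countable_or_cocountable [Uncountable X]
    {F : Set (Set X)} (hF : F.Countable) (hF_cc : ∀ C ∈ F, C.Countable ∨ Cᶜ.Countable) :
    ∃ A : Set X, A.Countable ∧ ∀ G ⊆ F, (⋂₀ G).Nonempty → (A ∩ ⋂₀ G).Nonempty := by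
  set small : Set (Set X) := {C ∈ F | C.Countable}
  set large : Set (Set X) := {C ∈ F | ¬C.Countable}
  have h_large : (⋂₀ large)ᶜ.Countable :=
    (hF.mono (sep_subset _ _)).compl_sInter_of_forall
      fun C hC => (hF_cc C hC.1).resolve_left hC.2
  obtain ⟨x, hx⟩ := nonempty_of_countable_compl h_large
  refine ⟨insert x (⋃₀ small), ((hF.mono (sep_subset _ _)).sUnion fun C hC => hC.2).insert x, ?_⟩
  rintro G hGF ⟨y, hy⟩
  by_cases h_small : ∃ C ∈ G, C.Countable
  · obtain ⟨C, hCG, hC⟩ := h_small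
    exact ⟨y, mem_insert_of_mem x ⟨C, ⟨hGF hCG, hC⟩, hy C hCG⟩, hy⟩
  · push Not at h_small
    have hG_large : G ⊆ large := fun C hC => ⟨hGF hC, h_small C hC⟩
    exact ⟨x, mem_insert x _, sInter_subset_sInter hG_large hx⟩

end

theorem stmt16 (X : Type*) [TopologicalSpace X] [Uncountable X]
    (h : ∀ C : Set X, IsClosed C → C.Countable ∨ Cᶜ.Countable) : ExpSep X :=
  fun _ hF hF_closed =>
    exists_countable_inter_sInter_nonempty_of_countable_or_cocountable hF
      fun C hC => h C (hF_closed C hC)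
end

section
/- Every exponentially separable space is functionally countable. -/
/-- A space is functionally countable. -/
def FunCtble (X : Type*) [TopologicalSpace X] : Prop :=
  ∀ f : X → ℝ, Continuous f → (Set.range f).Countable

/-! If `f` is continuous into a second countable regular space `Y`, the preimages of the closures
of a countable basis of `Y` form a countable family of closed sets such that, for each `x`, the
intersection of the members containing `x` lies in the fiber of `f x`. A countable set meeting all
these nonempty intersections therefore has image containing the whole range of `f`. -/

open Set TopologicalSpace

theorem exists_countable_isClosed_separating (Y : Type*) [TopologicalSpace Y]
    [SecondCountableTopology Y] [T3Space Y] :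
    ∃ C : Set (Set Y), C.Countable ∧ (∀ c ∈ C, IsClosed c) ∧
      ∀ y z, y ≠ z → ∃ c ∈ C, y ∈ c ∧ z ∉ c := by
  refine ⟨closure '' countableBasis Y, (countable_countableBasis Y).image _,
    forall_mem_image.2 fun _ _ ↦ isClosed_closure, fun y z hyz ↦ ?_⟩
  obtain ⟨t, htB, hyt, htz⟩ :=
    (isBasis_countableBasis Y).exists_closure_subset (isOpen_ne.mem_nhds hyz)
  exact ⟨closure t, mem_image_of_mem _ htB, subset_closure hyt, fun hz ↦ htz hz rfl⟩

namespace ExpSep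

variable {X Y : Type*} [TopologicalSpace X]

theorem countable_range_of_separating (hX : ExpSep X) {f : X → Y} {F : Set (Set X)}
    (hFc : F.Countable) (hF : ∀ S ∈ F, IsClosed S)
    (hsep : ∀ x x', f x ≠ f x' → ∃ S ∈ F, x ∈ S ∧ x' ∉ S) : (range f).Countable := by
  obtain ⟨A, hAc, hA⟩ := hX F hFc hF
  refine (hAc.image f).mono ?_
  rintro _ ⟨x, rfl⟩
  obtain ⟨a, haA, ha⟩ := hA {S ∈ F | x ∈ S} (sep_subset _ _) ⟨x, fun S hS ↦ hS.2⟩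
  refine ⟨a, haA, of_not_not fun hax ↦ ?_⟩
  obtain ⟨S, hSF, hxS, haS⟩ := hsep x a (Ne.symm hax)
  exact haS (ha S ⟨hSF, hxS⟩)

theorem countable_range_of_continuous [TopologicalSpace Y] [SecondCountableTopology Y]
    [T3Space Y] (hX : ExpSep X) {f : X → Y} (hf : Continuous f) : (range f).Countable := by
  obtain ⟨C, hCc, hC, hsep⟩ := exists_countable_isClosed_separating Y
  refine hX.countable_range_of_separating (hCc.image (f ⁻¹' ·))
    (forall_mem_image.2 fun c hc ↦ (hC c hc).preimage hf) fun x x' hxx' ↦ ?_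
  obtain ⟨c, hcC, hxc, hx'c⟩ := hsep _ _ hxx'
  exact ⟨f ⁻¹' c, mem_image_of_mem _ hcC, hxc, hx'c⟩

end ExpSep

theorem stmt18 (X : Type*) [TopologicalSpace X] (h : ExpSep X) : FunCtble X :=
  fun _ hf ↦ h.countable_range_of_continuous hf
end
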